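/- arXiv:2411.09575 — 5 statements merged into one kernel-verified Lean document; each statement's English description precedes it below -/
import Mathlib

section
/- Define the expanding sum of A = [[A₁,A₂],[A₃,A₄]] ∈ M(2m,ℂ) and B = [[B₁,B₂],[B₃,B₄]] ∈ M(2n,ℂ) (with blocks of sizes m and n respectively) as A ⊞ B := [[A₁⊕B₁, A₂⊕B₂],[A₃⊕B₃, A₄⊕B₄]], where ⊕ denotes the block-diagonal direct sum. Then the expanding sum is Hamiltonian if and only if both A and B are Hamiltonian: (A ⊞ B)ᵀ J₂ₘ₊₂ₙ = -J₂ₘ₊₂ₙ (A ⊞ B) if and only if Aᵀ J₂ₘ = -J₂ₘ A and Bᵀ J₂ₙ = -J₂ₙ B. -/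
open Matrix Complex

/-- Jordan block J(lam, n): lam on diagonal, 1 on superdiagonal. -/
def Jb (lam : ℂ) (n : ℕ) : Matrix (Fin n) (Fin n) ℂ :=
  fun i j => if (i : ℕ) + 1 = (j : ℕ) then 1 else if i = j then lam else 0

/-- sigma = diag(1, -1, 1, ..., (-1)^(n-1)). -/
def sigmaM (n : ℕ) : Matrix (Fin n) (Fin n) ℂ :=
  Matrix.diagonal (fun i => (-1 : ℂ) ^ (i : ℕ))

/-- tau: anti-identity, tau_{i,j} = 1 iff i+j = n+1 (1-indexed). -/
def tauM (n : ℕ) : Matrix (Fin n) (Fin n) ℂ :=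
  fun i j => if (i : ℕ) + (j : ℕ) + 2 = n + 1 then 1 else 0

/-- The standard symplectic form matrix J = [[0, I],[-I, 0]]. -/
def Jstd (I : Type*) [DecidableEq I] : Matrix (I ⊕ I) (I ⊕ I) ℂ :=
  Matrix.fromBlocks 0 1 (-1) 0

/-- Expanding sum of block matrices. -/
def esum {m n : ℕ}
    (A : Matrix (Fin m ⊕ Fin m) (Fin m ⊕ Fin m) ℂ)
    (B : Matrix (Fin n ⊕ Fin n) (Fin n ⊕ Fin n) ℂ) :
    Matrix ((Fin m ⊕ Fin n) ⊕ (Fin m ⊕ Fin n)) ((Fin m ⊕ Fin n) ⊕ (Fin m ⊕ Fin n)) ℂ :=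
  Matrix.fromBlocks
    (Matrix.fromBlocks A.toBlocks₁₁ 0 0 B.toBlocks₁₁)
    (Matrix.fromBlocks A.toBlocks₁₂ 0 0 B.toBlocks₁₂)
    (Matrix.fromBlocks A.toBlocks₂₁ 0 0 B.toBlocks₂₁)
    (Matrix.fromBlocks A.toBlocks₂₂ 0 0 B.toBlocks₂₂)

theorem stmt7 (m n : ℕ)
    (A : Matrix (Fin m ⊕ Fin m) (Fin m ⊕ Fin m) ℂ)
    (B : Matrix (Fin n ⊕ Fin n) (Fin n ⊕ Fin n) ℂ) :
    (esum A B)ᵀ * Jstd (Fin m ⊕ Fin n) = -(Jstd (Fin m ⊕ Fin n) * esum A B) ↔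
    (Aᵀ * Jstd (Fin m) = -(Jstd (Fin m) * A) ∧ Bᵀ * Jstd (Fin n) = -(Jstd (Fin n) * B)) := by

  conv_rhs => rw [← Matrix.fromBlocks_toBlocks A, ← Matrix.fromBlocks_toBlocks B]
  simp only [esum, Jstd, Matrix.fromBlocks_transpose, Matrix.fromBlocks_multiply,
    Matrix.fromBlocks_neg, Matrix.fromBlocks_inj, Matrix.mul_zero, Matrix.zero_mul,
    Matrix.mul_one, Matrix.one_mul, Matrix.mul_neg, Matrix.neg_mul, Matrix.transpose_zero,
    zero_add, add_zero, neg_zero, Matrix.transpose_neg, neg_neg]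
  tauto
end

section
/- Let λ ∈ ℂ and X = J(λ,n) ⊕ (-J(λ,n)ᵀ) ∈ M(2n,ℂ) (block diagonal), a Hamiltonian matrix. Then g = [[0, τ],[-τ, 0]], where τ is the n×n anti-identity matrix, is a symplectic matrix with g² = -I₂ₙ such that gXg⁻¹ = -X. -/
open Matrix Complex

/-! `τ` is the permutation matrix of `i ↦ n - 1 - i`, a symmetric involution, and reversing
both indices of a Jordan block transposes it: `τ J τ = Jᵀ`. Everything then follows by
`2 × 2` block multiplication, using `g⁻¹ = -g`. -/

lemma tauM_eq_toMatrix_revPerm (n : ℕ) :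
    tauM n = (Fin.revPerm : Equiv.Perm (Fin n)).toPEquiv.toMatrix := by
  ext i j
  have := i.isLt
  simp only [PEquiv.toMatrix_apply, Equiv.toPEquiv_apply, Option.mem_some_iff,
    Fin.revPerm_apply, tauM, Fin.ext_iff, Fin.val_rev]
  congr 1
  simp only [eq_iff_iff]
  omega

lemma tauM_mul {n : ℕ} (A : Matrix (Fin n) (Fin n) ℂ) :
    tauM n * A = A.submatrix Fin.rev id := by
  rw [tauM_eq_toMatrix_revPerm, PEquiv.toMatrix_toPEquiv_mul]
  rfl

lemma mul_tauM {n : ℕ} (A : Matrix (Fin n) (Fin n) ℂ) :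
    A * tauM n = A.submatrix id Fin.rev := by
  rw [tauM_eq_toMatrix_revPerm, PEquiv.mul_toMatrix_toPEquiv, Fin.revPerm_symm]
  rfl

lemma tauM_transpose (n : ℕ) : (tauM n)ᵀ = tauM n := by
  rw [tauM_eq_toMatrix_revPerm, ← PEquiv.toMatrix_symm, ← Equiv.toPEquiv_symm, Fin.revPerm_symm]

lemma tauM_mul_self (n : ℕ) : tauM n * tauM n = 1 := by
  rw [tauM_mul]
  ext i j
  simp [tauM_eq_toMatrix_revPerm, PEquiv.toMatrix_apply, Matrix.one_apply]

lemma Jb_submatrix_rev (lam : ℂ) (n : ℕ) :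
    (Jb lam n).submatrix Fin.rev Fin.rev = (Jb lam n)ᵀ := by
  ext i j
  simp only [Matrix.submatrix_apply, Matrix.transpose_apply, Jb, Fin.ext_iff, Fin.val_rev]
  have := i.isLt
  have := j.isLt
  split_ifs <;> first | rfl | omega

lemma tauM_mul_Jb_mul_tauM (lam : ℂ) (n : ℕ) :
    tauM n * Jb lam n * tauM n = (Jb lam n)ᵀ := by
  rw [tauM_mul, mul_tauM, Matrix.submatrix_submatrix]
  exact Jb_submatrix_rev lam n

section BlockMatrices

variable {I : Type*} [Fintype I] [DecidableEq I]

lemma fromBlocks_neg_transpose_isHamiltonian (A : Matrix I I ℂ) :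
    (fromBlocks A 0 0 (-Aᵀ))ᵀ * Jstd I = -(Jstd I * fromBlocks A 0 0 (-Aᵀ)) := by
  simp [Jstd, fromBlocks_transpose, fromBlocks_multiply, fromBlocks_neg]

lemma fromBlocks_antidiag_mul_self {R : Type*} [Ring R] {t : Matrix I I R} (ht : t * t = 1) :
    fromBlocks 0 t (-t) 0 * fromBlocks 0 t (-t) 0 = -1 := by
  simp [fromBlocks_multiply, ht, ← fromBlocks_one, fromBlocks_neg]

lemma fromBlocks_antidiag_isSymplectic {t : Matrix I I ℂ} (ht : tᵀ * t = 1) :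
    (fromBlocks 0 t (-t) 0)ᵀ * Jstd I * fromBlocks 0 t (-t) 0 = Jstd I := by
  simp [Jstd, fromBlocks_transpose, fromBlocks_multiply, ht]

lemma fromBlocks_antidiag_conj_fromBlocks {R : Type*} [CommRing R] {t A : Matrix I I R} (ht : t * t = 1)
    (hA : t * A * t = Aᵀ) :
    fromBlocks 0 t (-t) 0 * fromBlocks A 0 0 (-Aᵀ) * (fromBlocks 0 t (-t) 0)⁻¹ =
      -fromBlocks A 0 0 (-Aᵀ) := by
  have hinv : (fromBlocks 0 t (-t) 0)⁻¹ = -fromBlocks 0 t (-t) 0 :=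
    inv_eq_right_inv (by rw [mul_neg, fromBlocks_antidiag_mul_self ht, neg_neg])
  have hAt : t * Aᵀ * t = A := by
    rw [← hA, ← mul_assoc, ← mul_assoc, ht, one_mul, mul_assoc, ht, mul_one]
  rw [hinv]
  simp [fromBlocks_multiply, fromBlocks_neg, hA, hAt]

end BlockMatrices

theorem stmt14 (n : ℕ) (lam : ℂ) :
    let X : Matrix (Fin n ⊕ Fin n) (Fin n ⊕ Fin n) ℂ :=
      Matrix.fromBlocks (Jb lam n) 0 0 (-(Jb lam n)ᵀ)
    let g : Matrix (Fin n ⊕ Fin n) (Fin n ⊕ Fin n) ℂ :=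
      Matrix.fromBlocks 0 (tauM n) (-(tauM n)) 0
    (Xᵀ * Jstd (Fin n) = -(Jstd (Fin n) * X)) ∧
    (gᵀ * Jstd (Fin n) * g = Jstd (Fin n)) ∧
    g * g = -1 ∧ g * X * g⁻¹ = -X := by
  intro X g
  have hτ := tauM_mul_self n
  exact ⟨fromBlocks_neg_transpose_isHamiltonian _,
    fromBlocks_antidiag_isSymplectic (by rw [tauM_transpose, hτ]),
    fromBlocks_antidiag_mul_self hτ,
    fromBlocks_antidiag_conj_fromBlocks hτ (tauM_mul_Jb_mul_tauM lam n)⟩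
end

section
/- Let X = J(0,n) ⊕ (-J(0,n)ᵀ) ∈ M(2n,ℂ) (block diagonal), a Hamiltonian matrix. Then g = [[σ, 0],[0, σ]], with σ = diag(1,-1,...,(-1)^{n-1}), is a symplectic involution (g² = I₂ₙ, gᵀJ₂ₙg = J₂ₙ) satisfying gXg⁻¹ = -X. In particular X is strongly Ad-real in Sp(2n,ℂ). -/
open Matrix Complex

theorem stmt15 (n : ℕ) :
    let X : Matrix (Fin n ⊕ Fin n) (Fin n ⊕ Fin n) ℂ :=
      Matrix.fromBlocks (Jb 0 n) 0 0 (-(Jb 0 n)ᵀ)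
    let g : Matrix (Fin n ⊕ Fin n) (Fin n ⊕ Fin n) ℂ :=
      Matrix.fromBlocks (sigmaM n) 0 0 (sigmaM n)
    (gᵀ * Jstd (Fin n) * g = Jstd (Fin n)) ∧
    g * g = 1 ∧ g * X * g⁻¹ = -X := by
  intro X g
  have hsig2 : sigmaM n * sigmaM n = 1 := by
    simp only [sigmaM, Matrix.diagonal_mul_diagonal, ← mul_pow]
    norm_num
  have hsigT : (sigmaM n)ᵀ = sigmaM n := Matrix.diagonal_transpose _
  have hconj : sigmaM n * Jb 0 n * sigmaM n = -(Jb 0 n) := by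
    ext i j
    simp only [sigmaM, Jb, Matrix.diagonal_mul, Matrix.mul_diagonal, Matrix.neg_apply]
    split_ifs with h1 h2
    · have hj : ((-1:ℂ)) ^ (j:ℕ) = -(-1) ^ (i:ℕ) := by
        rw [← h1, pow_succ]; ring
      have hi : ((-1:ℂ)) ^ (i:ℕ) * (-1) ^ (i:ℕ) = 1 := by rw [← mul_pow]; norm_num
      simp [hj, mul_neg, hi]
    · ring
    · ring
  have hT : sigmaM n * (Jb 0 n)ᵀ * sigmaM n = -(Jb 0 n)ᵀ := by
    have h := congrArg Matrix.transpose hconj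
    simp only [Matrix.transpose_mul, Matrix.transpose_neg, hsigT] at h
    rw [Matrix.mul_assoc]
    exact h
  have hconjT : sigmaM n * (-(Jb 0 n)ᵀ) * sigmaM n = (Jb 0 n)ᵀ := by
    calc sigmaM n * (-(Jb 0 n)ᵀ) * sigmaM n
        = -(sigmaM n * (Jb 0 n)ᵀ * sigmaM n) := by noncomm_ring
      _ = (Jb 0 n)ᵀ := by rw [hT, neg_neg]
  have hgg : g * g = 1 := by
    show Matrix.fromBlocks (sigmaM n) 0 0 (sigmaM n) * Matrix.fromBlocks (sigmaM n) 0 0 (sigmaM n) = 1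
    rw [Matrix.fromBlocks_multiply]
    simp [hsig2, ← Matrix.fromBlocks_one]
  have hginv : g⁻¹ = g := by
    rw [Matrix.inv_eq_right_inv hgg]
  refine ⟨?_, hgg, ?_⟩
  · show (Matrix.fromBlocks (sigmaM n) 0 0 (sigmaM n))ᵀ * Jstd (Fin n) *
      Matrix.fromBlocks (sigmaM n) 0 0 (sigmaM n) = Jstd (Fin n)
    rw [Matrix.fromBlocks_transpose, hsigT]
    unfold Jstd
    rw [Matrix.fromBlocks_multiply, Matrix.fromBlocks_multiply]
    simp [hsig2]
  · rw [hginv]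
    show Matrix.fromBlocks (sigmaM n) 0 0 (sigmaM n) *
      Matrix.fromBlocks (Jb 0 n) 0 0 (-(Jb 0 n)ᵀ) *
      Matrix.fromBlocks (sigmaM n) 0 0 (sigmaM n) = -X
    rw [Matrix.fromBlocks_multiply, Matrix.fromBlocks_multiply]
    simp only [Matrix.mul_zero, Matrix.zero_mul, add_zero, zero_add, hconj, hconjT]
    show _ = -(Matrix.fromBlocks (Jb 0 n) 0 0 (-(Jb 0 n)ᵀ))
    rw [Matrix.fromBlocks_neg]
    simp
end

section
/- Let λ ∈ ℂ be nonzero, P = J(λ,n) ⊕ J(λ,n) ∈ M(2n,ℂ), and X = P ⊕ (-Pᵀ) ∈ M(4n,ℂ). Then the matrix g = [[0, h],[-h, 0]] with h = [[0, τ],[-τ, 0]] ∈ M(2n,ℂ), where τ is the n×n anti-identity matrix, is a symplectic involution in Sp(4n,ℂ) (g² = I₄ₙ, gᵀJ₄ₙg = J₄ₙ) satisfying gXg⁻¹ = -X. -/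
open Matrix Complex

lemma tau_mul_apply {n : ℕ} (A : Matrix (Fin n) (Fin n) ℂ) (i j : Fin n) :
    (tauM n * A) i j = A i.rev j := by
  rw [Matrix.mul_apply]
  rw [Finset.sum_eq_single i.rev]
  · have hi := i.isLt
    have hc : (i:ℕ) + (i.rev : ℕ) + 2 = n + 1 := by rw [Fin.val_rev]; omega
    simp only [tauM]
    rw [if_pos hc, one_mul]
  · intro b _ hb
    have hi := i.isLt; have hbl := b.isLt
    have hc : ¬((i:ℕ) + (b:ℕ) + 2 = n + 1) := by
      intro hc; apply hb; rw [Fin.ext_iff, Fin.val_rev]; omega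
    simp only [tauM]
    rw [if_neg hc, zero_mul]
  · intro hmem; exact absurd (Finset.mem_univ _) hmem

lemma mul_tau_apply {n : ℕ} (A : Matrix (Fin n) (Fin n) ℂ) (i j : Fin n) :
    (A * tauM n) i j = A i j.rev := by
  rw [Matrix.mul_apply]
  rw [Finset.sum_eq_single j.rev]
  · have hj := j.isLt
    have hc : ((j.rev:ℕ)) + (j : ℕ) + 2 = n + 1 := by rw [Fin.val_rev]; omega
    simp only [tauM]
    rw [if_pos hc, mul_one]
  · intro b _ hb
    have hj := j.isLt; have hbl := b.isLt
    have hc : ¬((b:ℕ) + (j:ℕ) + 2 = n + 1) := by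
      intro hc; apply hb; rw [Fin.ext_iff, Fin.val_rev]; omega
    simp only [tauM]
    rw [if_neg hc, mul_zero]
  · intro hmem; exact absurd (Finset.mem_univ _) hmem

lemma tau_mul_tau {n : ℕ} : tauM n * tauM n = 1 := by
  ext i j
  rw [tau_mul_apply]
  have hi := i.isLt; have hj := j.isLt
  have hc : ((i.rev:ℕ) + (j:ℕ) + 2 = n + 1) ↔ i = j := by
    rw [Fin.val_rev, Fin.ext_iff]; omega
  simp only [tauM, Matrix.one_apply]
  exact if_congr hc rfl rfl

lemma tau_transpose {n : ℕ} : (tauM n)ᵀ = tauM n := by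
  ext i j
  simp only [tauM, Matrix.transpose_apply]
  rw [add_comm (j:ℕ) (i:ℕ)]

lemma tau_Jb_tau {n : ℕ} (lam : ℂ) : tauM n * Jb lam n * tauM n = (Jb lam n)ᵀ := by
  ext i j
  rw [mul_tau_apply, tau_mul_apply]
  have hi := i.isLt; have hj := j.isLt
  have h1 : ((i.rev:ℕ) + 1 = (j.rev:ℕ)) ↔ ((j:ℕ) + 1 = (i:ℕ)) := by
    rw [Fin.val_rev, Fin.val_rev]; omega
  have h2 : i.rev = j.rev ↔ j = i := by
    rw [Fin.rev_inj]; exact eq_comm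
  simp only [Jb, Matrix.transpose_apply]
  exact if_congr h1 rfl (if_congr h2 rfl rfl)

lemma tau_Jbt_tau {n : ℕ} (lam : ℂ) : tauM n * (Jb lam n)ᵀ * tauM n = Jb lam n := by
  calc tauM n * (Jb lam n)ᵀ * tauM n
      = tauM n * (tauM n * Jb lam n * tauM n) * tauM n := by rw [tau_Jb_tau]
    _ = (tauM n * tauM n) * Jb lam n * (tauM n * tauM n) := by simp only [mul_assoc]
    _ = Jb lam n := by rw [tau_mul_tau, one_mul, mul_one]

theorem stmt16 (n : ℕ) (lam : ℂ) (hlam : lam ≠ 0) :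
    let P : Matrix (Fin n ⊕ Fin n) (Fin n ⊕ Fin n) ℂ :=
      Matrix.fromBlocks (Jb lam n) 0 0 (Jb lam n)
    let X : Matrix ((Fin n ⊕ Fin n) ⊕ (Fin n ⊕ Fin n)) ((Fin n ⊕ Fin n) ⊕ (Fin n ⊕ Fin n)) ℂ :=
      Matrix.fromBlocks P 0 0 (-Pᵀ)
    let h : Matrix (Fin n ⊕ Fin n) (Fin n ⊕ Fin n) ℂ :=
      Matrix.fromBlocks 0 (tauM n) (-(tauM n)) 0
    let g : Matrix ((Fin n ⊕ Fin n) ⊕ (Fin n ⊕ Fin n)) ((Fin n ⊕ Fin n) ⊕ (Fin n ⊕ Fin n)) ℂ :=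
      Matrix.fromBlocks 0 h (-h) 0
    (gᵀ * Jstd (Fin n ⊕ Fin n) * g = Jstd (Fin n ⊕ Fin n)) ∧
    g * g = 1 ∧ g * X * g⁻¹ = -X := by
  intro P X h g
  -- key block facts
  have hsq : h * h = -1 := by
    show Matrix.fromBlocks 0 (tauM n) (-(tauM n)) 0 * Matrix.fromBlocks 0 (tauM n) (-(tauM n)) 0 = -1
    rw [Matrix.fromBlocks_multiply]
    simp [tau_mul_tau, ← Matrix.fromBlocks_one, Matrix.fromBlocks_neg]
  have ht : hᵀ = -h := by
    show (Matrix.fromBlocks 0 (tauM n) (-(tauM n)) 0)ᵀ = -(Matrix.fromBlocks 0 (tauM n) (-(tauM n)) 0)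
    rw [Matrix.fromBlocks_transpose]
    simp [tau_transpose, Matrix.fromBlocks_neg]
  have hgg : g * g = 1 := by
    show Matrix.fromBlocks 0 h (-h) 0 * Matrix.fromBlocks 0 h (-h) 0 = 1
    rw [Matrix.fromBlocks_multiply]
    simp [hsq, ← Matrix.fromBlocks_one]
  have hginv : g⁻¹ = g := Matrix.inv_eq_right_inv hgg
  have hPh : h * P * h = -Pᵀ := by
    show Matrix.fromBlocks 0 (tauM n) (-(tauM n)) 0 * Matrix.fromBlocks (Jb lam n) 0 0 (Jb lam n)
        * Matrix.fromBlocks 0 (tauM n) (-(tauM n)) 0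
      = -(Matrix.fromBlocks (Jb lam n) 0 0 (Jb lam n))ᵀ
    rw [Matrix.fromBlocks_multiply, Matrix.fromBlocks_multiply, Matrix.fromBlocks_transpose]
    simp [Matrix.fromBlocks_neg, tau_Jb_tau]
  have hPth : h * Pᵀ * h = -P := by
    show Matrix.fromBlocks 0 (tauM n) (-(tauM n)) 0 * (Matrix.fromBlocks (Jb lam n) 0 0 (Jb lam n))ᵀ
        * Matrix.fromBlocks 0 (tauM n) (-(tauM n)) 0
      = -(Matrix.fromBlocks (Jb lam n) 0 0 (Jb lam n))
    rw [Matrix.fromBlocks_transpose, Matrix.fromBlocks_multiply, Matrix.fromBlocks_multiply]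
    simp [Matrix.fromBlocks_neg, tau_Jbt_tau]
  refine ⟨?_, hgg, ?_⟩
  · show (Matrix.fromBlocks 0 h (-h) 0)ᵀ * Matrix.fromBlocks 0 1 (-1) 0 * Matrix.fromBlocks 0 h (-h) 0
      = Matrix.fromBlocks 0 1 (-1) 0
    rw [Matrix.fromBlocks_transpose, Matrix.fromBlocks_multiply, Matrix.fromBlocks_multiply]
    simp [ht, hsq, Matrix.fromBlocks_neg]
  · rw [hginv]
    show Matrix.fromBlocks 0 h (-h) 0 * Matrix.fromBlocks P 0 0 (-Pᵀ) * Matrix.fromBlocks 0 h (-h) 0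
      = -(Matrix.fromBlocks P 0 0 (-Pᵀ))
    rw [Matrix.fromBlocks_multiply, Matrix.fromBlocks_multiply]
    simp only [Matrix.mul_zero, Matrix.zero_mul, Matrix.mul_neg, Matrix.neg_mul, zero_add, add_zero,
      neg_neg, Matrix.fromBlocks_neg, neg_zero]
    rw [show h * Pᵀ * h = -P from hPth, show h * P * h = -Pᵀ from hPh]
    rw [neg_neg]
end

section
/- Let λ ∈ ℂ be nonzero, let Q_λ = J(λ,k) ⊕ (-J(λ,k)) ∈ M(2k,ℂ), and let X = Q_λ ⊕ Q_λᵀ ∈ M(4k,ℂ) (a skew-Hamiltonian matrix). Then g = [[h, 0],[0, h]] with h = [[0, I_k],[I_k, 0]] is a symplectic involution in Sp(4k,ℂ) satisfying gXg⁻¹ = -X. -/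
open Matrix Complex

theorem stmt19 (k : ℕ) (lam : ℂ) (hlam : lam ≠ 0) :
    let Q : Matrix (Fin k ⊕ Fin k) (Fin k ⊕ Fin k) ℂ :=
      Matrix.fromBlocks (Jb lam k) 0 0 (-(Jb lam k))
    let X : Matrix ((Fin k ⊕ Fin k) ⊕ (Fin k ⊕ Fin k)) ((Fin k ⊕ Fin k) ⊕ (Fin k ⊕ Fin k)) ℂ :=
      Matrix.fromBlocks Q 0 0 Qᵀ
    let h : Matrix (Fin k ⊕ Fin k) (Fin k ⊕ Fin k) ℂ := Matrix.fromBlocks 0 1 1 0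
    let g : Matrix ((Fin k ⊕ Fin k) ⊕ (Fin k ⊕ Fin k)) ((Fin k ⊕ Fin k) ⊕ (Fin k ⊕ Fin k)) ℂ :=
      Matrix.fromBlocks h 0 0 h
    (Xᵀ * Jstd (Fin k ⊕ Fin k) = Jstd (Fin k ⊕ Fin k) * X) ∧
    (gᵀ * Jstd (Fin k ⊕ Fin k) * g = Jstd (Fin k ⊕ Fin k)) ∧
    g * g = 1 ∧ g * X * g⁻¹ = -X := by

  intro Q X h g
  have hT : hᵀ = h := by
    simp [h, Matrix.fromBlocks_transpose]
  have hh : h * h = 1 := by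
    simp [h, Matrix.fromBlocks_multiply, ← Matrix.fromBlocks_one]
  have hgg : g * g = 1 := by
    simp [g, Matrix.fromBlocks_multiply, hh, ← Matrix.fromBlocks_one]
  have hginv : g⁻¹ = g := by
    rw [Matrix.inv_eq_right_inv hgg]
  have hQ : h * Q * h = -Q := by
    simp [h, Q, Matrix.fromBlocks_multiply]
    ext (i | i) (j | j) <;> simp [Matrix.fromBlocks]
  have hQT : h * Qᵀ * h = -Qᵀ := by
    have := congrArg Matrix.transpose hQ
    simpa [Matrix.transpose_mul, hT, mul_assoc] using this
  refine ⟨?_, ?_, hgg, ?_⟩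
  · simp [X, Jstd, Matrix.fromBlocks_transpose, Matrix.fromBlocks_multiply]
  · simp [g, Jstd, Matrix.fromBlocks_transpose, Matrix.fromBlocks_multiply, hT, hh]
  · rw [hginv]
    show Matrix.fromBlocks h 0 0 h * Matrix.fromBlocks Q 0 0 Qᵀ * Matrix.fromBlocks h 0 0 h = -X
    simp [Matrix.fromBlocks_multiply, hQ, hQT, X]
    ext (i | i) (j | j) <;> simp [Matrix.fromBlocks]
end
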